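/- For n > k, the generating function LB_{n,k}(12/3, q) = Σ_{i=1}^{k} q^{(n-k)(k-i)}; in particular its degree is (n-k)(k-1). -/

import Mathlib

open Finset Polynomial

/-- Set partitions of `[n] = {1, …, n}`, modeled as finpartitions of `Fin n`. -/
abbrev SP (n : ℕ) := Finpartition (Finset.univ : Finset (Fin n))

noncomputable instance (n : ℕ) : Fintype (SP n) :=
  Fintype.ofInjective Finpartition.parts fun _ _ h => Finpartition.ext h

/-- `i` and `j` lie in the same block of the set partition `P`. -/
def inSameBlock {n : ℕ} (P : SP n) (i j : Fin n) : Prop :=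
  ∃ B ∈ P.parts, i ∈ B ∧ j ∈ B

/-- `P` avoids the pattern `1/2/3`: no three elements lie in three pairwise distinct blocks. -/
def avoids1_2_3 {n : ℕ} (P : SP n) : Prop :=
  ¬ ∃ a b c : Fin n, a < b ∧ b < c ∧
    ¬ inSameBlock P a b ∧ ¬ inSameBlock P b c ∧ ¬ inSameBlock P a c

/-- `P` avoids the pattern `13/2`. -/
def avoids13_2 {n : ℕ} (P : SP n) : Prop :=
  ¬ ∃ a b c : Fin n, a < b ∧ b < c ∧ inSameBlock P a c ∧ ¬ inSameBlock P a b

/-- `P` avoids the pattern `1/23`. -/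
def avoids1_23 {n : ℕ} (P : SP n) : Prop :=
  ¬ ∃ a b c : Fin n, a < b ∧ b < c ∧ inSameBlock P b c ∧ ¬ inSameBlock P a b

/-- `P` avoids the pattern `12/3`. -/
def avoids12_3 {n : ℕ} (P : SP n) : Prop :=
  ¬ ∃ a b c : Fin n, a < b ∧ b < c ∧ inSameBlock P a b ∧ ¬ inSameBlock P a c

/-- `P` avoids the pattern `123`: every block has at most two elements. -/
def avoids123 {n : ℕ} (P : SP n) : Prop :=
  ∀ B ∈ P.parts, B.card ≤ 2

/-- The block of `P` containing `i`. -/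
def blockOf {n : ℕ} (P : SP n) (i : Fin n) : Finset (Fin n) :=
  (P.parts.filter (fun B => i ∈ B)).sup id

/-- The restricted growth function of `P`: the letter at position `i` is the index
(starting from 1) of the block containing `i`, blocks being ordered by increasing minima. -/
def rgf {n : ℕ} (P : SP n) (i : Fin n) : ℕ :=
  (P.parts.filter (fun B => B.min ≤ (blockOf P i).min)).card

/-- The left-bigger statistic of Wachs and White. -/
def lbStat {n : ℕ} (w : Fin n → ℕ) : ℕ :=
  ∑ j : Fin n, (((Finset.univ.filter (fun i => i < j)).image w).filter (fun v => w j < v)).card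

/-- The left-smaller statistic of Wachs and White. -/
def lsStat {n : ℕ} (w : Fin n → ℕ) : ℕ :=
  ∑ j : Fin n, (((Finset.univ.filter (fun i => i < j)).image w).filter (fun v => v < w j)).card

/-- The right-bigger statistic of Wachs and White. -/
def rbStat {n : ℕ} (w : Fin n → ℕ) : ℕ :=
  ∑ j : Fin n, (((Finset.univ.filter (fun i => j < i)).image w).filter (fun v => w j < v)).card

/-- The right-smaller statistic of Wachs and White. -/
def rsStat {n : ℕ} (w : Fin n → ℕ) : ℕ :=
  ∑ j : Fin n, (((Finset.univ.filter (fun i => j < i)).image w).filter (fun v => v < w j)).card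

open Classical in
/-- The generating function `∑ q^{stat(π)}` over `k`-block partitions of `[n]` avoiding
a given family of patterns (described by the avoidance predicate `avoid`). -/
noncomputable def genPoly (n k : ℕ) (avoid : SP n → Prop) (stat : (Fin n → ℕ) → ℕ) :
    Polynomial ℕ :=
  ∑ P ∈ Finset.univ.filter (fun P : SP n => P.parts.card = k ∧ avoid P),
    Polynomial.X ^ (stat (rgf P))

/-! In a `12/3`-avoiding partition, once two elements `x < y` share a block, every `z > y` lies
in that block too. Hence every block not containing the largest element is a singleton, and the
block of the largest element is `{a} ∪ {c, …, n-1}` with `a < c`; counting blocks forces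
`c = k`. Conversely each `a < k` gives such a partition, with RGF `1 2 ⋯ k` followed by `n - k`
copies of `a + 1`, and each of these trailing letters sees exactly `k - 1 - a` larger letters to
its left. -/

namespace Finpartition

variable {α : Type*} [Fintype α] [DecidableEq α]

def blockWithSingletons (B : Finset α) (hB : B.Nonempty) : Finpartition (univ : Finset α) :=
  (⊥ : Finpartition Bᶜ).extend hB.ne_empty disjoint_compl_left (by simp)

variable {B : Finset α} {hB : B.Nonempty}

lemma mem_blockWithSingletons_parts {C : Finset α} :
    C ∈ (blockWithSingletons B hB).parts ↔ C = B ∨ ∃ x ∉ B, C = {x} := by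
  simp [blockWithSingletons, eq_comm]

lemma card_blockWithSingletons_parts : #(blockWithSingletons B hB).parts = #Bᶜ + 1 := by
  rw [blockWithSingletons, card_extend, card_bot]

lemma part_blockWithSingletons (x : α) :
    (blockWithSingletons B hB).part x = if x ∈ B then B else {x} := by
  split_ifs with hx
  · exact part_eq_of_mem _ (mem_blockWithSingletons_parts.2 (.inl rfl)) hx
  · exact part_eq_of_mem _ (mem_blockWithSingletons_parts.2 (.inr ⟨x, hx, rfl⟩))
      (mem_singleton_self x)

lemma eq_blockWithSingletons {P : Finpartition (univ : Finset α)} (hBP : B ∈ P.parts)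
    (hsingle : ∀ C ∈ P.parts, C ≠ B → ∃ x, C = {x}) : P = blockWithSingletons B hB := by
  ext C
  rw [mem_blockWithSingletons_parts]
  constructor
  · intro hC
    by_cases hCB : C = B
    · exact .inl hCB
    obtain ⟨x, rfl⟩ := hsingle C hC hCB
    exact .inr ⟨x, fun hx => hCB (P.eq_of_mem_parts hC hBP (mem_singleton_self x) hx), rfl⟩
  · rintro (rfl | ⟨x, hx, rfl⟩)
    · exact hBP
    have hxP : x ∈ P.part x := P.mem_part_self.2 (mem_univ x)
    obtain ⟨y, hy⟩ := hsingle _ (P.part_mem.2 (mem_univ x)) (fun h => hx (h ▸ hxP))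
    rw [hy, mem_singleton] at hxP
    subst hxP
    exact hy ▸ P.part_mem.2 (mem_univ x)

end Finpartition

section SetPartitions

variable {n : ℕ}

lemma blockOf_eq_part (P : SP n) (i : Fin n) : blockOf P i = P.part i := by
  have : P.parts.filter (i ∈ ·) = {P.part i} := by
    ext C
    simp only [mem_filter, mem_singleton]
    constructor
    · rintro ⟨hC, hi⟩
      exact (P.part_eq_of_mem hC hi).symm
    · rintro rfl
      exact ⟨P.part_mem.2 (mem_univ i), P.mem_part_self.2 (mem_univ i)⟩
  rw [blockOf, this, sup_singleton, id]

lemma rgf_eq_card_filter_image_min (P : SP n) (i : Fin n) :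
    rgf P i = #((P.parts.image Finset.min).filter (· ≤ (P.part i).min)) := by
  rw [rgf, blockOf_eq_part, filter_image, card_image_of_injOn]
  intro C hC D hD hCD
  have hCne := P.nonempty_of_mem_parts (mem_filter.1 hC).1
  have hmC : C.min' hCne ∈ D := mem_of_min (hCD ▸ (coe_min' hCne).symm)
  exact P.eq_of_mem_parts (mem_filter.1 hC).1 (mem_filter.1 hD).1 (C.min'_mem hCne) hmC

lemma avoids12_3.mem_of_lt {P : SP n} (hP : avoids12_3 P) {C : Finset (Fin n)} (hC : C ∈ P.parts)
    {x y z : Fin n} (hx : x ∈ C) (hy : y ∈ C) (hxy : x < y) (hyz : y < z) : z ∈ C := by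
  by_contra hz
  refine hP ⟨x, y, z, hxy, hyz, ⟨C, hC, hx, hy⟩, fun ⟨D, hD, hxD, hzD⟩ => hz ?_⟩
  rwa [P.eq_of_mem_parts hD hC hxD hx] at hzD

lemma avoids12_3.exists_eq_singleton [NeZero n] {P : SP n} (hP : avoids12_3 P)
    {C : Finset (Fin n)} (hC : C ∈ P.parts) (htop : ⊤ ∉ C) : ∃ x, C = {x} := by
  have hlt : ∀ x ∈ C, ∀ y ∈ C, ¬ x < y := fun x hx y hy hxy =>
    htop (hP.mem_of_lt hC hx hy hxy (lt_top_iff_ne_top.2 fun h => htop (h ▸ hy)))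
  obtain ⟨x, hx⟩ := P.nonempty_of_mem_parts hC
  refine ⟨x, eq_singleton_iff_unique_mem.2 ⟨hx, fun y hy => ?_⟩⟩
  by_contra hne
  rcases lt_or_gt_of_ne hne with h | h
  · exact hlt y hy x hx h
  · exact hlt x hx y hy h

lemma avoids12_3.eq_blockWithSingletons [NeZero n] {P : SP n} (hP : avoids12_3 P) :
    P = Finpartition.blockWithSingletons (P.part ⊤) (P.part_nonempty.2 (mem_univ _)) :=
  Finpartition.eq_blockWithSingletons (P.part_mem.2 (mem_univ _)) fun _ hC hne =>
    hP.exists_eq_singleton hC fun htop => hne (P.part_eq_of_mem hC htop).symm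

end SetPartitions

lemma Finset.min_insert_Ici {α : Type*} [LinearOrder α] [LocallyFiniteOrderTop α] {a c : α}
    (hac : a < c) : (insert a (Ici c)).min = a := by
  rw [min_insert, min_eq_left]
  exact Finset.le_min fun x hx => WithTop.coe_le_coe.2 (hac.le.trans (mem_Ici.1 hx))

section TailBlock

variable {n : ℕ}

def tailBlockPartition (a c : Fin n) : SP n :=
  Finpartition.blockWithSingletons (insert a (Ici c)) (insert_nonempty _ _)

lemma compl_insert_Ici (a c : Fin n) : (insert a (Ici c))ᶜ = (Iio c).erase a := by
  ext x
  simp only [mem_compl, mem_insert, mem_Ici, not_or, not_le, mem_erase, mem_Iio]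

lemma avoids12_3_tailBlockPartition (a c : Fin n) : avoids12_3 (tailBlockPartition a c) := by
  rintro ⟨x, y, z, hxy, hyz, ⟨C, hC, hx, hy⟩, hxz⟩
  rcases Finpartition.mem_blockWithSingletons_parts.1 hC with rfl | ⟨w, -, rfl⟩
  · refine hxz ⟨_, hC, hx, mem_insert_of_mem (mem_Ici.2 ?_)⟩
    simp only [mem_insert, mem_Ici] at hx hy
    rcases hy with rfl | hy
    · rcases hx with rfl | hx
      · exact absurd hxy (lt_irrefl _)
      · exact (hx.trans hxy.le).trans hyz.le
    · exact hy.trans hyz.le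
  · rw [mem_singleton] at hx hy
    exact hxy.ne (hx.trans hy.symm)

variable {a c : Fin n}

lemma card_tailBlockPartition_parts (hac : a < c) : #(tailBlockPartition a c).parts = c := by
  rw [tailBlockPartition, Finpartition.card_blockWithSingletons_parts, compl_insert_Ici a c,
    card_erase_of_mem (mem_Iio.2 hac), Fin.card_Iio]
  have : a.val < c.val := hac
  omega

lemma image_min_tailBlockPartition_parts (hac : a < c) :
    (tailBlockPartition a c).parts.image Finset.min = (Iio c).image (↑) := by
  rw [tailBlockPartition, Finpartition.blockWithSingletons, Finpartition.extend_parts,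
    Finpartition.parts_bot, image_insert, min_insert_Ici hac, map_eq_image, image_image,
    compl_insert_Ici a c]
  simp only [Function.comp_def, Function.Embedding.coeFn_mk, min_singleton]
  rw [← image_insert, insert_erase (mem_Iio.2 hac)]

lemma min_part_tailBlockPartition (hac : a < c) (i : Fin n) :
    ((tailBlockPartition a c).part i).min = ↑(if i < c then i else a) := by
  rw [tailBlockPartition, Finpartition.part_blockWithSingletons]
  by_cases hic : i < c
  · rw [if_pos hic]
    by_cases hia : i = a
    · subst hia
      rw [if_pos (mem_insert_self i _), min_insert_Ici hac]
    · rw [if_neg (by simp [hia, hic]), min_singleton]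
  · rw [if_neg hic, if_pos (mem_insert_of_mem (mem_Ici.2 (not_lt.1 hic))), min_insert_Ici hac]

lemma rgf_tailBlockPartition (hac : a < c) (i : Fin n) :
    rgf (tailBlockPartition a c) i = if i < c then i.val + 1 else a.val + 1 := by
  have hfilter : ∀ m < c, (Iio c).filter (· ≤ m) = Iic m := fun m hm => by
    ext x
    simp only [mem_filter, mem_Iio, mem_Iic, and_iff_right_iff_imp]
    exact fun hx => hx.trans_lt hm
  rw [rgf_eq_card_filter_image_min, image_min_tailBlockPartition_parts hac,
    min_part_tailBlockPartition hac, filter_image,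
    card_image_of_injective _ WithTop.coe_injective]
  simp only [WithTop.coe_le_coe]
  split_ifs with hic
  · rw [hfilter i hic, Fin.card_Iic]
  · rw [hfilter a hac, Fin.card_Iic]

lemma tailBlockPartition_injOn (c : Fin n) :
    Set.InjOn (tailBlockPartition · c) (Iio c : Set (Fin n)) := by
  have hpart : ∀ a : Fin n, (tailBlockPartition a c).part c = insert a (Ici c) := fun a => by
    rw [tailBlockPartition, Finpartition.part_blockWithSingletons,
      if_pos (mem_insert_of_mem (mem_Ici.2 le_rfl))]
  intro a ha b _ (hab : tailBlockPartition a c = tailBlockPartition b c)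
  have ha' : a ∈ insert b (Ici c) := by
    rw [← hpart b, ← hab, hpart a]
    exact mem_insert_self a _
  rcases mem_insert.1 ha' with h | h
  · exact h
  · exact absurd (mem_Ici.1 h) (not_le.2 (mem_Iio.1 ha))

end TailBlock

section Classification

variable {n : ℕ} {P : SP n} {c : Fin n}

lemma avoids12_3.part_top_eq_insert_Ici [NeZero n] (hP : avoids12_3 P) (hk : #P.parts = c) :
    ∃ a < c, P.part ⊤ = insert a (Ici c) := by
  set B := P.part ⊤
  have hBP : B ∈ P.parts := P.part_mem.2 (mem_univ _)
  have hBne : B.Nonempty := P.nonempty_of_mem_parts hBP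
  have hBcard : #B = n - c + 1 := by
    rw [hP.eq_blockWithSingletons, Finpartition.card_blockWithSingletons_parts, card_compl,
      Fintype.card_fin] at hk
    change n - #B + 1 = c at hk
    have := card_le_univ B
    rw [Fintype.card_fin] at this
    omega
  set a := B.min' hBne
  have hupper : IsUpperSet (B.erase a : Set (Fin n)) := by
    intro y z hyz hy
    rw [mem_coe, mem_erase] at hy ⊢
    have hay : a < y := lt_of_le_of_ne (B.min'_le y hy.2) (Ne.symm hy.1)
    rcases hyz.eq_or_lt with rfl | hlt
    · exact hy
    · exact ⟨(hay.trans hlt).ne', hP.mem_of_lt hBP (B.min'_mem hBne) hy.2 hay hlt⟩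
  have hcard : #(B.erase a) = n - c := by
    rw [card_erase_of_mem (B.min'_mem hBne), hBcard]
    rfl
  obtain ⟨b, hb⟩ := hupper.eq_empty_or_Ici.resolve_left fun h => by
    have := c.isLt
    rw [coe_eq_empty] at h
    rw [h, card_empty] at hcard
    omega
  rw [← coe_Ici, Finset.coe_inj] at hb
  have hbc : b = c := by
    have := c.isLt
    rw [hb, Fin.card_Ici] at hcard
    omega
  subst hbc
  refine ⟨a, not_le.1 fun hba => ?_, ?_⟩
  · have : a ∈ B.erase a := hb ▸ mem_Ici.2 hba
    exact (mem_erase.1 this).1 rfl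
  · rw [← hb, insert_erase (B.min'_mem hBne)]

lemma avoids12_3.exists_eq_tailBlockPartition (hP : avoids12_3 P) (hk : #P.parts = c) :
    ∃ a < c, tailBlockPartition a c = P := by
  have : NeZero n := ⟨c.pos.ne'⟩
  obtain ⟨a, hac, hB⟩ := hP.part_top_eq_insert_Ici hk
  refine ⟨a, hac, ?_⟩
  rw [hP.eq_blockWithSingletons, tailBlockPartition]
  congr 1
  exact hB.symm

end Classification

lemma lbStat_range_append_replicate {n : ℕ} {a c : Fin n} (hac : a < c) :
    lbStat (fun i => if i < c then i.val + 1 else a.val + 1) = (n - c) * (c - 1 - a) := by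
  set w : Fin n → ℕ := fun i => if i < c then i.val + 1 else a.val + 1
  have hterm : ∀ j, #(((univ.filter (· < j)).image w).filter (w j < ·))
      = if c ≤ j then (c - 1 - a : ℕ) else 0 := by
    intro j
    rw [filter_gt_eq_Iio]
    split_ifs with hcj
    · have hwj : w j = a.val + 1 := if_neg (not_lt.2 hcj)
      have : ((Iio j).image w).filter (w j < ·) = (Ioo a c).image (·.val + 1) := by
        ext v
        simp only [mem_filter, mem_image, mem_Iio, mem_Ioo, hwj]
        constructor
        · rintro ⟨⟨i, -, rfl⟩, hv⟩
          by_cases hic : i < c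
          · simp only [w, if_pos hic, add_lt_add_iff_right, Fin.val_fin_lt] at hv ⊢
            exact ⟨i, ⟨hv, hic⟩, rfl⟩
          · simp only [w, if_neg hic, lt_irrefl] at hv
        · rintro ⟨i, ⟨hai, hic⟩, rfl⟩
          refine ⟨⟨i, hic.trans_le hcj, if_pos hic⟩, ?_⟩
          exact Nat.succ_lt_succ hai
      rw [this, card_image_of_injective _ fun x y h => Fin.ext (by simpa using h), Fin.card_Ioo]
      omega
    · rw [card_eq_zero, filter_eq_empty_iff]
      rintro v hv
      obtain ⟨i, hij, rfl⟩ := mem_image.1 hv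
      have hjc : j < c := not_le.1 hcj
      have hic : i < c := (mem_Iio.1 hij).trans hjc
      simp only [w, if_pos hjc, if_pos hic, add_lt_add_iff_right, not_lt, Fin.val_fin_le]
      exact (mem_Iio.1 hij).le
  rw [lbStat, sum_congr rfl fun j _ => hterm j, sum_ite, sum_const_zero, add_zero, sum_const,
    smul_eq_mul, filter_le_eq_Ici, Fin.card_Ici]

lemma Polynomial.natDegree_sum_range_X_pow_mul {R : Type*} [Semiring R] [Nontrivial R]
    (m k : ℕ) : (∑ i ∈ range k, (X : R[X]) ^ (m * i)).natDegree = m * (k - 1) := by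
  rcases Nat.eq_zero_or_pos m with rfl | hm
  · simp
  rcases Nat.eq_zero_or_pos k with rfl | hk
  · simp
  have hle : (∑ i ∈ range k, (X : R[X]) ^ (m * i)).natDegree ≤ m * (k - 1) :=
    natDegree_sum_le_of_forall_le _ _ fun i hi =>
      (natDegree_X_pow_le _).trans (Nat.mul_le_mul_left _ (by rw [mem_range] at hi; omega))
  refine natDegree_eq_of_le_of_coeff_ne_zero hle ?_
  rw [finsetSum_coeff, sum_eq_single (k - 1)]
  · simp
  · intro i _ hi
    rw [coeff_X_pow, if_neg fun h => hi (Nat.eq_of_mul_eq_mul_left hm h).symm]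
  · intro h
    exact absurd (mem_range.2 (Nat.sub_lt hk one_pos)) h

theorem genPoly_avoids12_3_lbStat {n : ℕ} (c : Fin n) :
    genPoly n c avoids12_3 lbStat = ∑ i ∈ range c, (X : ℕ[X]) ^ ((n - c) * i) := by
  calc genPoly n c avoids12_3 lbStat
      = ∑ P ∈ (Iio c).image (tailBlockPartition · c), X ^ lbStat (rgf P) := by
        rw [genPoly]
        congr 1
        ext P
        simp only [mem_filter, mem_univ, true_and, mem_image, mem_Iio]
        constructor
        · rintro ⟨hk, hP⟩
          exact hP.exists_eq_tailBlockPartition hk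
        · rintro ⟨a, hac, rfl⟩
          exact ⟨card_tailBlockPartition_parts hac, avoids12_3_tailBlockPartition a c⟩
    _ = ∑ a ∈ Iio c, X ^ ((n - c) * (c - 1 - a)) := by
        rw [sum_image (tailBlockPartition_injOn c)]
        refine sum_congr rfl fun a ha => ?_
        rw [funext (rgf_tailBlockPartition (mem_Iio.1 ha)),
          lbStat_range_append_replicate (mem_Iio.1 ha)]
    _ = ∑ i ∈ range c, X ^ ((n - c) * (c - 1 - i)) := by
        rw [← Nat.Iio_eq_range, ← Fin.map_valEmbedding_Iio, sum_map]
        rfl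
    _ = ∑ i ∈ range c, X ^ ((n - c) * i) := sum_range_reflect (fun i => X ^ ((n - c) * i)) c

/-- For `n > k`, `LB_{n,k}(12/3, q) = Σ_{i=1}^{k} q^{(n-k)(k-i)}`;
in particular its degree is `(n-k)(k-1)`. -/
theorem stmt13 (n k : ℕ) (h : k < n) :
    genPoly n k avoids12_3 lbStat =
      ∑ i ∈ Finset.range k, (X : Polynomial ℕ) ^ ((n - k) * i) ∧
    (genPoly n k avoids12_3 lbStat).natDegree = (n - k) * (k - 1) := by
  have hsum := genPoly_avoids12_3_lbStat (⟨k, h⟩ : Fin n)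
  exact ⟨hsum, by rw [hsum]; exact natDegree_sum_range_X_pow_mul _ _⟩
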